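/- arXiv:2509.07921 — 2 statements merged into one kernel-verified Lean document; each statement's English description precedes it below -/
import Mathlib

section
/- The middle SFT algebra reduces to the commutative bordered Chekanov–Eliashberg middle algebra: the ideal J ⊆ A^M generated by all generators β^L_{ij}, β^R_{ij}, and α^R_{ij} satisfies d^M(J) ⊆ J (where d^M = d^M_SFT + δ^M_str), and under the induced isomorphism of A^M/J with the polynomial algebra 𝔽₂[α^L_{ij} : 1 ≤ i < j ≤ n], the induced differential on the quotient sends α^L_{ij} to Σ_{i<k<j} α^L_{ik}·α^L_{kj}. -/
open MvPolynomial

/-- Raw generator names for the middle algebra. -/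
inductive MGenRaw (n : ℕ) : Type
  | aL (i j : Fin n) : MGenRaw n
  | aR (i j : Fin n) : MGenRaw n
  | bL (i j : Fin n) : MGenRaw n
  | bR (i j : Fin n) : MGenRaw n

/-- Validity of a raw generator name, given the two pairings. -/
def MGenValid {n : ℕ} (sL sR : Equiv.Perm (Fin n)) : MGenRaw n → Prop
  | .aL i j => i < j
  | .aR i j => i < j
  | .bL i j => i < j ∧ sL i = j
  | .bR i j => i < j ∧ sR i = j

/-- Generators of the middle algebra `A^M`. -/
def MGen (n : ℕ) (sL sR : Equiv.Perm (Fin n)) : Type :=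
  {g : MGenRaw n // MGenValid sL sR g}

/-- The middle algebra `A^M`: the free commutative unital `𝔽₂`-algebra on the generators. -/
abbrev AM (n : ℕ) (sL sR : Equiv.Perm (Fin n)) : Type :=
  MvPolynomial (MGen n sL sR) (ZMod 2)

/-- The generator `α^L_{ij}` (or `0` if `¬ i < j`). -/
noncomputable def genAL {n : ℕ} (sL sR : Equiv.Perm (Fin n)) (i j : Fin n) : AM n sL sR :=
  if h : i < j then X (⟨MGenRaw.aL i j, h⟩ : MGen n sL sR) else 0

/-- The generator `α^R_{ij}` (or `0` if `¬ i < j`). -/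
noncomputable def genAR {n : ℕ} (sL sR : Equiv.Perm (Fin n)) (i j : Fin n) : AM n sL sR :=
  if h : i < j then X (⟨MGenRaw.aR i j, h⟩ : MGen n sL sR) else 0

/-- The generator `β^L_{ij}` (or `0` if invalid). -/
noncomputable def genBL {n : ℕ} (sL sR : Equiv.Perm (Fin n)) (i j : Fin n) : AM n sL sR :=
  if h : i < j ∧ sL i = j then X (⟨MGenRaw.bL i j, h⟩ : MGen n sL sR) else 0

/-- The generator `β^R_{ij}` (or `0` if invalid). -/
noncomputable def genBR {n : ℕ} (sL sR : Equiv.Perm (Fin n)) (i j : Fin n) : AM n sL sR :=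
  if h : i < j ∧ sR i = j then X (⟨MGenRaw.bR i j, h⟩ : MGen n sL sR) else 0

/-- The path `1, β^R(1), β^L(β^R(1)), …` (with `1` rendered as `0 : Fin n`). -/
def pathSeq {n : ℕ} [NeZero n] (sL sR : Equiv.Perm (Fin n)) : ℕ → Fin n
  | 0 => 0
  | k + 1 => if k % 2 = 0 then sR (pathSeq sL sR k) else sL (pathSeq sL sR k)

/-- The β-generator traversed at step `k` of the path (indices in increasing order). -/
noncomputable def stepGen {n : ℕ} [NeZero n] (sL sR : Equiv.Perm (Fin n)) (k : ℕ) :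
    AM n sL sR :=
  if k % 2 = 0 then
    genBR sL sR (min (pathSeq sL sR k) (pathSeq sL sR (k + 1)))
      (max (pathSeq sL sR k) (pathSeq sL sR (k + 1)))
  else
    genBL sL sR (min (pathSeq sL sR k) (pathSeq sL sR (k + 1)))
      (max (pathSeq sL sR k) (pathSeq sL sR (k + 1)))

/-- `γ_i`: the sum of the β-generators along the path from `1` to the first occurrence of `i`. -/
noncomputable def gammaEl {n : ℕ} [NeZero n] (sL sR : Equiv.Perm (Fin n))
    (hvisit : ∀ i : Fin n, ∃ m, pathSeq sL sR m = i) (i : Fin n) : AM n sL sR :=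
  ∑ k ∈ Finset.range (Nat.find (hvisit i)), stepGen sL sR k

/-- Values of the string differential `δ^M_str` on generators. -/
noncomputable def deltaStrVal {n : ℕ} [NeZero n] (sL sR : Equiv.Perm (Fin n))
    (hvisit : ∀ i : Fin n, ∃ m, pathSeq sL sR m = i) : MGen n sL sR → AM n sL sR :=
  fun g =>
    match g.1 with
    | .aR i j =>
        (gammaEl sL sR hvisit i + gammaEl sL sR hvisit j) * genAR sL sR i j
          + ∑ k : Fin n, if i < k ∧ k < j then genAR sL sR i k * genAR sL sR k j else 0
    | .aL i j =>
        (gammaEl sL sR hvisit i + gammaEl sL sR hvisit j) * genAL sL sR i j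
          + ∑ k : Fin n, if i < k ∧ k < j then genAL sL sR i k * genAL sL sR k j else 0
    | .bR i j => genBR sL sR i j ^ 2
    | .bL i j => genBL sL sR i j ^ 2

/-- The common value of `d^M_SFT` on the β-generators `β^x_{ij}`. -/
noncomputable def betaSFTVal {n : ℕ} (sL sR : Equiv.Perm (Fin n)) (i j : Fin n) : AM n sL sR :=
  (∑ k : Fin n, if k < i then genAL sL sR k i * genAR sL sR k i else 0)
    + (∑ k : Fin n, if i < k ∧ k ≠ j then genAL sL sR i k * genAR sL sR i k else 0)
    + (∑ k : Fin n, if k < j ∧ k ≠ i then genAL sL sR k j * genAR sL sR k j else 0)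
    + (∑ k : Fin n, if j < k then genAL sL sR j k * genAR sL sR j k else 0)

/-- Values of the SFT differential `d^M_SFT` on generators. -/
noncomputable def dSFTVal {n : ℕ} (sL sR : Equiv.Perm (Fin n)) : MGen n sL sR → AM n sL sR :=
  fun g =>
    match g.1 with
    | .aR i j =>
        (∑ k : Fin n, if j < k then genAR sL sR i k * genAL sL sR j k else 0)
          + (∑ k : Fin n, if k < i then genAR sL sR k j * genAL sL sR k i else 0)
    | .aL i j =>
        (∑ k : Fin n, if j < k then genAL sL sR i k * genAR sL sR j k else 0)
          + (∑ k : Fin n, if k < i then genAL sL sR k j * genAR sL sR k i else 0)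
    | .bL i j => betaSFTVal sL sR i j
    | .bR i j => betaSFTVal sL sR i j

/-- The prescribed values of the SFT bracket on pairs of generators. -/
noncomputable def mBrVal {n : ℕ} (sL sR : Equiv.Perm (Fin n)) :
    MGen n sL sR → MGen n sL sR → AM n sL sR :=
  fun g g' =>
    match g.1, g'.1 with
    | .aL i j, .aL k l =>
        if j = k then genAL sL sR i l else if i = l then genAL sL sR k j else 0
    | .aR i j, .aR k l =>
        if j = k then genAR sL sR i l else if i = l then genAR sL sR k j else 0
    | .aL i j, .bL k l =>
        if Xor (i = k ∨ i = l) (j = k ∨ j = l) then genAL sL sR i j else 0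
    | .bL k l, .aL i j =>
        if Xor (i = k ∨ i = l) (j = k ∨ j = l) then genAL sL sR i j else 0
    | .aR i j, .bR k l =>
        if Xor (i = k ∨ i = l) (j = k ∨ j = l) then genAR sL sR i j else 0
    | .bR k l, .aR i j =>
        if Xor (i = k ∨ i = l) (j = k ∨ j = l) then genAR sL sR i j else 0
    | _, _ => 0

/-- `Br` is *the* SFT bracket: the symmetric `𝔽₂`-bilinear operation on `A^M` satisfying the
Leibniz rule in each variable and taking the prescribed values on generators. -/
def IsSFTBracket {n : ℕ} (sL sR : Equiv.Perm (Fin n))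
    (Br : AM n sL sR → AM n sL sR → AM n sL sR) : Prop :=
  (∀ x y, Br x y = Br y x) ∧
    (∀ x y z, Br x (y + z) = Br x y + Br x z) ∧
    (∀ x y z, Br x (y * z) = Br x y * z + y * Br x z) ∧
    (∀ g g' : MGen n sL sR, Br (X g) (X g') = mBrVal sL sR g g')

/-- The Hamiltonian `h^M = Σ_{i<j} α^L_{ij} α^R_{ij}`. -/
noncomputable def hamM {n : ℕ} (sL sR : Equiv.Perm (Fin n)) : AM n sL sR :=
  ∑ i : Fin n, ∑ j : Fin n, if i < j then genAL sL sR i j * genAR sL sR i j else 0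

/-- The quadratic Hamiltonian `h^M_2`. -/
noncomputable def hamM2 {n : ℕ} (sL sR : Equiv.Perm (Fin n)) : AM n sL sR :=
  (∑ i : Fin n, ∑ k : Fin n, ∑ j : Fin n,
      if i < k ∧ k < j then genAR sL sR i k * genAR sL sR k j * genAL sL sR i j else 0)
    + (∑ i : Fin n, ∑ k : Fin n, ∑ j : Fin n,
      if i < k ∧ k < j then genAL sL sR i k * genAL sL sR k j * genAR sL sR i j else 0)

/-- Maslov weights of generators, given a Maslov potential `μ`. -/
def mWeight {n : ℕ} (sL sR : Equiv.Perm (Fin n)) (μ : Fin n → ℤ) : MGen n sL sR → ℤ :=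
  fun g =>
    match g.1 with
    | .aL i j => μ i - μ j - 1
    | .aR i j => μ j - μ i - 1
    | .bL _ _ => -1
    | .bR _ _ => -1

/-- The ideal `J ⊆ A^M` generated by all the generators `β^L_{ij}`, `β^R_{ij}`, `α^R_{ij}`
(i.e. all generators other than the `α^L_{ij}`). -/
noncomputable def nonALIdeal {n : ℕ} (sL sR : Equiv.Perm (Fin n)) : Ideal (AM n sL sR) :=
  Ideal.span {x : AM n sL sR |
    ∃ g : MGen n sL sR, x = X g ∧ ∀ i j : Fin n, g.1 ≠ MGenRaw.aL i j}

/-! Every monomial of `d^M_SFT` of a generator contains a factor `α^R`, each `γ_i` is a sum of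
`β`'s, and `δ^M_str β = β²`; so both differentials map the generators of `J` into `J`, and a
derivation that maps the generators of an ideal into it preserves the ideal. Modulo `J`,
`d^M α^L_{ij}` keeps only the term `Σ α^L_{ik} α^L_{kj}` of `δ^M_str`. -/

theorem Derivation.apply_mem_span {R A : Type*} [CommSemiring R] [CommSemiring A] [Algebra R A]
    (D : Derivation R A A) {S : Set A} (hS : ∀ s ∈ S, D s ∈ Ideal.span S) :
    ∀ x ∈ Ideal.span S, D x ∈ Ideal.span S := by
  intro x hx
  induction hx using Submodule.span_induction with
  | mem s hs => exact hS s hs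
  | zero => simp
  | add x y _ _ hx hy => simpa using add_mem hx hy
  | smul a x hx' hx =>
    rw [smul_eq_mul, D.leibniz, smul_eq_mul, smul_eq_mul]
    exact add_mem (Ideal.mul_mem_left _ a hx) (Ideal.mul_mem_right (D a) _ hx')

theorem Ideal.sum_ite_mem {R ι : Type*} [CommSemiring R] (I : Ideal R) (s : Finset ι)
    (p : ι → Prop) [DecidablePred p] {f : ι → R} (hf : ∀ k, p k → f k ∈ I) :
    (∑ k ∈ s, if p k then f k else 0) ∈ I :=
  Ideal.sum_mem I fun k _ => by
    split_ifs with hk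
    exacts [hf k hk, I.zero_mem]

section NonALIdeal

variable {n : ℕ} (sL sR : Equiv.Perm (Fin n))

theorem X_mem_nonALIdeal {g : MGen n sL sR} (hg : ∀ i j : Fin n, g.1 ≠ MGenRaw.aL i j) :
    X g ∈ nonALIdeal sL sR :=
  Ideal.subset_span ⟨g, rfl, hg⟩

theorem genAR_mem_nonALIdeal (i j : Fin n) : genAR sL sR i j ∈ nonALIdeal sL sR := by
  unfold genAR
  split_ifs
  exacts [X_mem_nonALIdeal sL sR (fun _ _ h => by cases h), (nonALIdeal sL sR).zero_mem]

theorem genBL_mem_nonALIdeal (i j : Fin n) : genBL sL sR i j ∈ nonALIdeal sL sR := by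
  unfold genBL
  split_ifs
  exacts [X_mem_nonALIdeal sL sR (fun _ _ h => by cases h), (nonALIdeal sL sR).zero_mem]

theorem genBR_mem_nonALIdeal (i j : Fin n) : genBR sL sR i j ∈ nonALIdeal sL sR := by
  unfold genBR
  split_ifs
  exacts [X_mem_nonALIdeal sL sR (fun _ _ h => by cases h), (nonALIdeal sL sR).zero_mem]

theorem gammaEl_mem_nonALIdeal [NeZero n] (hvisit : ∀ i : Fin n, ∃ m, pathSeq sL sR m = i)
    (i : Fin n) : gammaEl sL sR hvisit i ∈ nonALIdeal sL sR := by
  refine Ideal.sum_mem _ fun k _ => ?_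
  unfold stepGen
  split_ifs
  exacts [genBR_mem_nonALIdeal sL sR _ _, genBL_mem_nonALIdeal sL sR _ _]

theorem dSFTVal_mem_nonALIdeal (g : MGen n sL sR) : dSFTVal sL sR g ∈ nonALIdeal sL sR := by
  have hAR := genAR_mem_nonALIdeal sL sR
  obtain ⟨_ | _ | _ | _, _⟩ := g <;>
    simp only [dSFTVal, betaSFTVal] <;>
    repeat' first
      | apply add_mem
      | exact Ideal.sum_ite_mem _ _ _ fun _ _ => Ideal.mul_mem_left _ _ (hAR _ _)
      | exact Ideal.sum_ite_mem _ _ _ fun _ _ => Ideal.mul_mem_right _ _ (hAR _ _)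

theorem deltaStrVal_mem_nonALIdeal [NeZero n] (hvisit : ∀ i : Fin n, ∃ m, pathSeq sL sR m = i)
    {g : MGen n sL sR} (hg : ∀ i j : Fin n, g.1 ≠ MGenRaw.aL i j) :
    deltaStrVal sL sR hvisit g ∈ nonALIdeal sL sR := by
  obtain ⟨⟨i, j⟩ | ⟨i, j⟩ | ⟨i, j⟩ | ⟨i, j⟩, _⟩ := g
  · exact absurd rfl (hg i j)
  · exact add_mem (Ideal.mul_mem_left _ _ (genAR_mem_nonALIdeal sL sR i j))
      (Ideal.sum_ite_mem _ _ _ fun _ _ => Ideal.mul_mem_right _ _ (genAR_mem_nonALIdeal sL sR _ _))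
  · exact Ideal.pow_mem_of_mem _ (genBL_mem_nonALIdeal sL sR i j) 2 two_pos
  · exact Ideal.pow_mem_of_mem _ (genBR_mem_nonALIdeal sL sR i j) 2 two_pos

theorem mk_deltaStrVal_eq_of_aL [NeZero n] (hvisit : ∀ i : Fin n, ∃ m, pathSeq sL sR m = i)
    {g : MGen n sL sR} {i j : Fin n} (hg : g.1 = MGenRaw.aL i j) :
    Ideal.Quotient.mk (nonALIdeal sL sR) (deltaStrVal sL sR hvisit g) =
      Ideal.Quotient.mk (nonALIdeal sL sR)
        (∑ k : Fin n, if i < k ∧ k < j then genAL sL sR i k * genAL sL sR k j else 0) := by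
  obtain ⟨_, _⟩ := g
  subst hg
  have hγ : (gammaEl sL sR hvisit i + gammaEl sL sR hvisit j) * genAL sL sR i j
      ∈ nonALIdeal sL sR :=
    Ideal.mul_mem_right _ _ <|
      add_mem (gammaEl_mem_nonALIdeal sL sR hvisit i) (gammaEl_mem_nonALIdeal sL sR hvisit j)
  simp only [deltaStrVal]
  rw [map_add, Ideal.Quotient.eq_zero_iff_mem.2 hγ, zero_add]

end NonALIdeal

theorem middle_reduces_to_CE_general {n : ℕ} [NeZero n]
    (sL sR : Equiv.Perm (Fin n))
    (hvisit : ∀ i : Fin n, ∃ m, pathSeq sL sR m = i)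
    (Dstr : Derivation (ZMod 2) (AM n sL sR) (AM n sL sR))
    (hDstr : ∀ g : MGen n sL sR, Dstr (X g) = deltaStrVal sL sR hvisit g)
    (Dsft : Derivation (ZMod 2) (AM n sL sR) (AM n sL sR))
    (hDsft : ∀ g : MGen n sL sR, Dsft (X g) = dSFTVal sL sR g) :
    (∀ x ∈ nonALIdeal sL sR, Dsft x + Dstr x ∈ nonALIdeal sL sR) ∧
      (∀ i j : Fin n, i < j →
        Ideal.Quotient.mk (nonALIdeal sL sR)
            (Dsft (genAL sL sR i j) + Dstr (genAL sL sR i j)) =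
          Ideal.Quotient.mk (nonALIdeal sL sR)
            (∑ k : Fin n, if i < k ∧ k < j then genAL sL sR i k * genAL sL sR k j else 0)) := by
  refine ⟨(Dsft + Dstr).apply_mem_span ?_, fun i j hij => ?_⟩
  · rintro _ ⟨g, rfl, hg⟩
    rw [Derivation.add_apply, hDsft, hDstr]
    exact add_mem (dSFTVal_mem_nonALIdeal sL sR g) (deltaStrVal_mem_nonALIdeal sL sR hvisit hg)
  · obtain ⟨g, hg, hX⟩ : ∃ g : MGen n sL sR, g.1 = .aL i j ∧ genAL sL sR i j = X g :=
      ⟨⟨.aL i j, hij⟩, rfl, dif_pos hij⟩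
    rw [hX, hDsft, hDstr, map_add,
      Ideal.Quotient.eq_zero_iff_mem.2 (dSFTVal_mem_nonALIdeal sL sR g), zero_add,
      mk_deltaStrVal_eq_of_aL sL sR hvisit hg]

/-- The middle SFT algebra reduces to the commutative bordered
Chekanov–Eliashberg middle algebra: `J` is `d^M`-invariant, and in the quotient
`A^M/J ≅ 𝔽₂[α^L_ij]` the induced differential sends `α^L_ij` to `Σ_(i<k<j) α^L_ik α^L_kj`. -/
theorem middle_reduces_to_CE {n : ℕ} [NeZero n] (hn2 : 2 ≤ n) (hnEven : Even n)
    (sL sR : Equiv.Perm (Fin n))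
    (hsLne : ∀ i, sL i ≠ i) (hsLinv : ∀ i, sL (sL i) = i)
    (hsRne : ∀ i, sR i ≠ i) (hsRinv : ∀ i, sR (sR i) = i)
    (hvisit : ∀ i : Fin n, ∃ m, pathSeq sL sR m = i)
    (Dstr : Derivation (ZMod 2) (AM n sL sR) (AM n sL sR))
    (hDstr : ∀ g : MGen n sL sR, Dstr (X g) = deltaStrVal sL sR hvisit g)
    (Dsft : Derivation (ZMod 2) (AM n sL sR) (AM n sL sR))
    (hDsft : ∀ g : MGen n sL sR, Dsft (X g) = dSFTVal sL sR g) :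
    (∀ x ∈ nonALIdeal sL sR, Dsft x + Dstr x ∈ nonALIdeal sL sR) ∧
      (∀ i j : Fin n, i < j →
        Ideal.Quotient.mk (nonALIdeal sL sR)
            (Dsft (genAL sL sR i j) + Dstr (genAL sL sR i j)) =
          Ideal.Quotient.mk (nonALIdeal sL sR)
            (∑ k : Fin n, if i < k ∧ k < j then genAL sL sR i k * genAL sL sR k j else 0)) :=
  middle_reduces_to_CE_general sL sR hvisit Dstr hDstr Dsft hDsft
end

section
/- The differential d^M on the middle algebra lowers the Maslov grading by 1: for every generator g of A^M, d^M(g) = d^M_SFT(g) + δ^M_str(g) is a homogeneous element of degree |g| − 1 (and hence d^M maps each homogeneous component of degree k into the homogeneous component of degree k − 1). -/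
open MvPolynomial

/-!
Every value of `d^M_SFT` and `δ^M_str` on a generator `g` is a sum of products whose factor
degrees add up to `|g| - 1`; the `γ_i` contribute degree `-1` as sums of β-generators.
A derivation sending each variable `x` to a homogeneous element of degree `|x| + c` shifts the
degree of every homogeneous polynomial by `c`, by the Leibniz rule on monomials.
-/

namespace MvPolynomial

variable {R M σ : Type*} [CommSemiring R] [AddCommMonoid M] {w : σ → M}

theorem IsWeightedHomogeneous.mul_of_add_eq {p q : MvPolynomial σ R} {a b c : M}
    (hp : p.IsWeightedHomogeneous w a) (hq : q.IsWeightedHomogeneous w b) (h : a + b = c) :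
    (p * q).IsWeightedHomogeneous w c :=
  h ▸ hp.mul hq

theorem IsWeightedHomogeneous.ite_zero {p : MvPolynomial σ R} {m : M} (P : Prop) [Decidable P]
    (hp : p.IsWeightedHomogeneous w m) : (if P then p else 0).IsWeightedHomogeneous w m := by
  split_ifs
  exacts [hp, isWeightedHomogeneous_zero R w m]

theorem isWeightedHomogeneous_dite_X {P : Prop} [Decidable P] {f : P → σ} {m : M}
    (hf : ∀ h, w (f h) = m) :
    (if h : P then X (f h) else 0 : MvPolynomial σ R).IsWeightedHomogeneous w m := by
  split_ifs with h
  exacts [hf h ▸ isWeightedHomogeneous_X R w (f h), isWeightedHomogeneous_zero R w m]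

theorem IsWeightedHomogeneous.derivation_apply
    {D : Derivation R (MvPolynomial σ R) (MvPolynomial σ R)} {c : M}
    (hD : ∀ i, (D (X i)).IsWeightedHomogeneous w (w i + c)) {p : MvPolynomial σ R} {m : M}
    (hp : p.IsWeightedHomogeneous w m) : (D p).IsWeightedHomogeneous w (m + c) := by
  have monomial_case : ∀ s (a : R), ∃ k, (monomial s a).IsWeightedHomogeneous w k ∧
      (D (monomial s a)).IsWeightedHomogeneous w (k + c) := by
    -- the degree is existential because `induction_on_monomial` does not track the exponent
    refine induction_on_monomial (fun a => ⟨0, isWeightedHomogeneous_C w a, ?_⟩) ?_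
    · rw [derivation_C]
      exact isWeightedHomogeneous_zero R w _
    rintro q i ⟨k, hq, hDq⟩
    have hX := isWeightedHomogeneous_X R w i
    refine ⟨k + w i, hq.mul hX, ?_⟩
    rw [D.leibniz, smul_eq_mul, smul_eq_mul]
    exact (hq.mul_of_add_eq (hD i) (add_assoc _ _ _).symm).add
      (hX.mul_of_add_eq hDq (by abel))
  induction hp using IsWeightedHomogeneous.induction_on with
  | zero => exact (map_zero D).symm ▸ isWeightedHomogeneous_zero R w (m + c)
  | add p q _ _ hDp hDq => simpa only [map_add] using hDp.add hDq
  | monomial s a hs =>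
    obtain ⟨k, hk, hDk⟩ := monomial_case s a
    rcases eq_or_ne a 0 with rfl | ha
    · rw [monomial_zero, map_zero]
      exact isWeightedHomogeneous_zero R w (m + c)
    · rwa [hk.inj_right (monomial_eq_zero.not.mpr ha)
        (isWeightedHomogeneous_monomial w s a hs)] at hDk

end MvPolynomial

section MiddleAlgebra

variable {n : ℕ} (sL sR : Equiv.Perm (Fin n)) (μ : Fin n → ℤ)

theorem isWeightedHomogeneous_genAL (i j : Fin n) :
    (genAL sL sR i j).IsWeightedHomogeneous (mWeight sL sR μ) (μ i - μ j - 1) :=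
  isWeightedHomogeneous_dite_X fun _ => rfl

theorem isWeightedHomogeneous_genAR (i j : Fin n) :
    (genAR sL sR i j).IsWeightedHomogeneous (mWeight sL sR μ) (μ j - μ i - 1) :=
  isWeightedHomogeneous_dite_X fun _ => rfl

theorem isWeightedHomogeneous_genBL (i j : Fin n) :
    (genBL sL sR i j).IsWeightedHomogeneous (mWeight sL sR μ) (-1) :=
  isWeightedHomogeneous_dite_X fun _ => rfl

theorem isWeightedHomogeneous_genBR (i j : Fin n) :
    (genBR sL sR i j).IsWeightedHomogeneous (mWeight sL sR μ) (-1) :=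
  isWeightedHomogeneous_dite_X fun _ => rfl

theorem isWeightedHomogeneous_stepGen [NeZero n] (k : ℕ) :
    (stepGen sL sR k).IsWeightedHomogeneous (mWeight sL sR μ) (-1) := by
  unfold stepGen
  split
  exacts [isWeightedHomogeneous_genBR sL sR μ _ _, isWeightedHomogeneous_genBL sL sR μ _ _]

theorem isWeightedHomogeneous_gammaEl [NeZero n]
    (hvisit : ∀ i : Fin n, ∃ m, pathSeq sL sR m = i) (i : Fin n) :
    (gammaEl sL sR hvisit i).IsWeightedHomogeneous (mWeight sL sR μ) (-1) :=
  .sum _ _ _ fun k _ => isWeightedHomogeneous_stepGen sL sR μ k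

theorem isWeightedHomogeneous_betaSFTVal (i j : Fin n) :
    (betaSFTVal sL sR i j).IsWeightedHomogeneous (mWeight sL sR μ) (-2) := by
  unfold betaSFTVal
  refine .add (.add (.add ?_ ?_) ?_) ?_ <;>
  exact .sum _ _ _ fun k _ => .ite_zero _ <|
    (isWeightedHomogeneous_genAL sL sR μ _ _).mul_of_add_eq
      (isWeightedHomogeneous_genAR sL sR μ _ _) (by ring)

theorem isWeightedHomogeneous_dSFTVal (g : MGen n sL sR) :
    (dSFTVal sL sR g).IsWeightedHomogeneous (mWeight sL sR μ) (mWeight sL sR μ g - 1) := by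
  obtain ⟨⟨i, j⟩ | ⟨i, j⟩ | ⟨i, j⟩ | ⟨i, j⟩, -⟩ := g <;> dsimp only [dSFTVal, mWeight]
  · refine .add (.sum _ _ _ fun k _ => ?_) (.sum _ _ _ fun k _ => ?_) <;>
    exact .ite_zero _ <| (isWeightedHomogeneous_genAL sL sR μ _ _).mul_of_add_eq
      (isWeightedHomogeneous_genAR sL sR μ _ _) (by ring)
  · refine .add (.sum _ _ _ fun k _ => ?_) (.sum _ _ _ fun k _ => ?_) <;>
    exact .ite_zero _ <| (isWeightedHomogeneous_genAR sL sR μ _ _).mul_of_add_eq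
      (isWeightedHomogeneous_genAL sL sR μ _ _) (by ring)
  · exact isWeightedHomogeneous_betaSFTVal sL sR μ i j
  · exact isWeightedHomogeneous_betaSFTVal sL sR μ i j

theorem isWeightedHomogeneous_deltaStrVal [NeZero n]
    (hvisit : ∀ i : Fin n, ∃ m, pathSeq sL sR m = i) (g : MGen n sL sR) :
    (deltaStrVal sL sR hvisit g).IsWeightedHomogeneous (mWeight sL sR μ)
      (mWeight sL sR μ g - 1) := by
  have hγ := isWeightedHomogeneous_gammaEl sL sR μ hvisit
  obtain ⟨⟨i, j⟩ | ⟨i, j⟩ | ⟨i, j⟩ | ⟨i, j⟩, -⟩ := g <;> dsimp only [deltaStrVal, mWeight]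
  · refine .add (((hγ i).add (hγ j)).mul_of_add_eq (isWeightedHomogeneous_genAL sL sR μ i j)
      (by ring)) (.sum _ _ _ fun k _ => .ite_zero _ ?_)
    exact (isWeightedHomogeneous_genAL sL sR μ _ _).mul_of_add_eq
      (isWeightedHomogeneous_genAL sL sR μ _ _) (by ring)
  · refine .add (((hγ i).add (hγ j)).mul_of_add_eq (isWeightedHomogeneous_genAR sL sR μ i j)
      (by ring)) (.sum _ _ _ fun k _ => .ite_zero _ ?_)
    exact (isWeightedHomogeneous_genAR sL sR μ _ _).mul_of_add_eq
      (isWeightedHomogeneous_genAR sL sR μ _ _) (by ring)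
  · rw [sq]
    exact (isWeightedHomogeneous_genBL sL sR μ i j).mul_of_add_eq
      (isWeightedHomogeneous_genBL sL sR μ i j) (by ring)
  · rw [sq]
    exact (isWeightedHomogeneous_genBR sL sR μ i j).mul_of_add_eq
      (isWeightedHomogeneous_genBR sL sR μ i j) (by ring)

end MiddleAlgebra

theorem middle_dM_lowers_grading_general {n : ℕ} [NeZero n]
    (sL sR : Equiv.Perm (Fin n))
    (hvisit : ∀ i : Fin n, ∃ m, pathSeq sL sR m = i)
    (μ : Fin n → ℤ)
    (Dstr : Derivation (ZMod 2) (AM n sL sR) (AM n sL sR))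
    (hDstr : ∀ g : MGen n sL sR, Dstr (X g) = deltaStrVal sL sR hvisit g)
    (Dsft : Derivation (ZMod 2) (AM n sL sR) (AM n sL sR))
    (hDsft : ∀ g : MGen n sL sR, Dsft (X g) = dSFTVal sL sR g) :
    (∀ g : MGen n sL sR,
        MvPolynomial.IsWeightedHomogeneous (mWeight sL sR μ)
          (Dsft (X g) + Dstr (X g)) (mWeight sL sR μ g - 1)) ∧
      (∀ (k : ℤ) (x : AM n sL sR),
        MvPolynomial.IsWeightedHomogeneous (mWeight sL sR μ) x k →
          MvPolynomial.IsWeightedHomogeneous (mWeight sL sR μ) (Dsft x + Dstr x) (k - 1)) := by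
  have on_generators : ∀ g : MGen n sL sR, (Dsft (X g) + Dstr (X g)).IsWeightedHomogeneous
      (mWeight sL sR μ) (mWeight sL sR μ g - 1) := fun g => by
    rw [hDsft, hDstr]
    exact (isWeightedHomogeneous_dSFTVal sL sR μ g).add
      (isWeightedHomogeneous_deltaStrVal sL sR μ hvisit g)
  refine ⟨on_generators, fun k x hx => ?_⟩
  have hshift := hx.derivation_apply (D := Dsft + Dstr) (c := -1) fun g => by
    rw [Derivation.add_apply, ← sub_eq_add_neg]
    exact on_generators g
  rwa [Derivation.add_apply, ← sub_eq_add_neg] at hshift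

/-- The differential `d^M` lowers the Maslov grading by `1`. -/
theorem middle_dM_lowers_grading {n : ℕ} [NeZero n] (hn2 : 2 ≤ n) (hnEven : Even n)
    (sL sR : Equiv.Perm (Fin n))
    (hsLne : ∀ i, sL i ≠ i) (hsLinv : ∀ i, sL (sL i) = i)
    (hsRne : ∀ i, sR i ≠ i) (hsRinv : ∀ i, sR (sR i) = i)
    (hvisit : ∀ i : Fin n, ∃ m, pathSeq sL sR m = i)
    (μ : Fin n → ℤ)
    (Dstr : Derivation (ZMod 2) (AM n sL sR) (AM n sL sR))
    (hDstr : ∀ g : MGen n sL sR, Dstr (X g) = deltaStrVal sL sR hvisit g)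
    (Dsft : Derivation (ZMod 2) (AM n sL sR) (AM n sL sR))
    (hDsft : ∀ g : MGen n sL sR, Dsft (X g) = dSFTVal sL sR g) :
    (∀ g : MGen n sL sR,
        MvPolynomial.IsWeightedHomogeneous (mWeight sL sR μ)
          (Dsft (X g) + Dstr (X g)) (mWeight sL sR μ g - 1)) ∧
      (∀ (k : ℤ) (x : AM n sL sR),
        MvPolynomial.IsWeightedHomogeneous (mWeight sL sR μ) x k →
          MvPolynomial.IsWeightedHomogeneous (mWeight sL sR μ) (Dsft x + Dstr x) (k - 1)) :=
  middle_dM_lowers_grading_general sL sR hvisit μ Dstr hDstr Dsft hDsft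
end
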